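/- Let p ≥ 2 be an integer. Assume there exist nonzero real numbers a_1 = 1, a_2, …, a_p such that ⟨E_{M1⋯Mk} | F^{N1⋯Nk}⟩ = a_k (ℙ_k)_{M1⋯Mk}^{N1⋯Nk} for k = 2, …, p. Then for all indices M2, …, Mp, N1, …, Np the following identity holds in U_1: ⟦E_{M2⋯Mp}, F^{N1⋯Np}⟧ = a_p Σ_{M1} (ℙ_p)_{M1 M2⋯Mp}^{N1⋯Np} F^{M1}. -/

import Mathlib

/-- Nested bracket `⟦f M1, ⟦f M2, …, ⟦f M(k-1), f Mk⟧⋯⟧⟧` of a family `f : ι → V`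
along a tuple of `k` indices (junk value `0` for `k = 0`). -/
def nest {V : Type} [AddCommGroup V] [Module ℝ V] {ι : Type}
    (bb : V →ₗ[ℝ] V →ₗ[ℝ] V) (f : ι → V) : (k : ℕ) → (Fin k → ι) → V
  | 0, _ => 0
  | 1, M => f (M 0)
  | (k + 2), M => bb (f (M 0)) (nest bb f (k + 1) (fun i => M i.succ))

/-!
The bracket `⟦E_{M2⋯Mp}, F^{N1⋯Np}⟧` has degree `-(p-1) + p = 1`, and `U_1` is spanned by the
`F^M`, which are dual to the `E_M`; so it is determined by its pairings with the `E_{M1}`.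
By invariance these are `⟨⟦E_{M1}, E_{M2⋯Mp}⟧ | F^{N1⋯Np}⟩ = ⟨E_{M1⋯Mp} | F^{N1⋯Np}⟩ = a_p ℙ_p`.
-/

section Nest

variable {V : Type} [AddCommGroup V] [Module ℝ V] {ι : Type}
  (bb : V →ₗ[ℝ] V →ₗ[ℝ] V)

@[simp]
theorem nest_one (f : ι → V) (M : Fin 1 → ι) : nest bb f 1 M = f (M 0) := rfl

theorem nest_cons (f : ι → V) (m : ℕ) (i : ι) (M : Fin (m + 1) → ι) :
    nest bb f (m + 2) (Fin.cons i M) = bb (f i) (nest bb f (m + 1) M) := rfl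

theorem range_nest_one (f : ι → V) : Set.range (nest bb f 1) = Set.range f := by
  ext v
  constructor
  · rintro ⟨M, rfl⟩
    exact ⟨M 0, rfl⟩
  · rintro ⟨i, rfl⟩
    exact ⟨fun _ => i, rfl⟩

theorem nest_mem {U : ℤ → Submodule ℝ V}
    (hgrade : ∀ (p q : ℤ) (x y : V), x ∈ U p → y ∈ U q → bb x y ∈ U (p + q))
    {f : ι → V} {ε : ℤ} (hf : ∀ i, f i ∈ U ε) :
    ∀ (m : ℕ) (M : Fin (m + 1) → ι), nest bb f (m + 1) M ∈ U ((m + 1) * ε)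
  | 0, M => by simpa using hf (M 0)
  | m + 1, M => by
    have h := hgrade _ _ _ _ (hf (M 0)) (nest_mem hgrade hf m (Fin.tail M))
    rw [← Fin.cons_self_tail M, nest_cons]
    convert h using 2
    push_cast
    ring

end Nest

theorem eq_sum_smul_of_mem_span_of_dual {R V ι : Type*} [CommSemiring R] [AddCommMonoid V]
    [Module R V] [Fintype ι] [DecidableEq ι] {form : V →ₗ[R] V →ₗ[R] R} {E F : ι → V}
    (hEF : ∀ M N, form (E M) (F N) = if M = N then (1 : R) else 0)
    {y : V} (hy : y ∈ Submodule.span R (Set.range F)) :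
    y = ∑ i, form (E i) y • F i := by
  obtain ⟨c, rfl⟩ := Submodule.mem_span_range_iff_exists_fun R |>.mp hy
  congr! with i
  simp [hEF]

theorem bracket_E_multi_with_F_multi_top_general
    {V : Type} [AddCommGroup V] [Module ℝ V]
    (U : ℤ → Submodule ℝ V)
    (bb : V →ₗ[ℝ] V →ₗ[ℝ] V)
    (form : V →ₗ[ℝ] V →ₗ[ℝ] ℝ)
    (hgrade : ∀ (p q : ℤ) (x y : V), x ∈ U p → y ∈ U q → bb x y ∈ U (p + q))
    (hforminv : ∀ x y z : V, form (bb x y) z = form x (bb y z))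
    {ι : Type} [Fintype ι] [DecidableEq ι]
    (E F : ι → V)
    (hE : ∀ M, E M ∈ U (-1))
    (hF : ∀ M, F M ∈ U 1)
    (hEF : ∀ M N, form (E M) (F N) = if M = N then (1 : ℝ) else 0)
    (hspanF : ∀ m : ℕ, 1 ≤ m → U (m : ℤ) ≤ Submodule.span ℝ (Set.range (nest bb F m)))
    (k : ℕ)
    (P : (m : ℕ) → (Fin m → ι) → (Fin m → ι) → ℝ)
    (a : ℕ → ℝ)
    (haP : ∀ m, 2 ≤ m → m ≤ k + 2 → ∀ M N : Fin m → ι,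
      form (nest bb E m M) (nest bb F m N) = a m * P m M N) :
    ∀ (M : Fin (k + 1) → ι) (N : Fin (k + 2) → ι),
      bb (nest bb E (k + 1) M) (nest bb F (k + 2) N)
        = a (k + 2) • ∑ M1 : ι, P (k + 2) (Fin.cons M1 M) N • F M1 := by
  intro M N
  have hdeg : bb (nest bb E (k + 1) M) (nest bb F (k + 2) N) ∈ U 1 := by
    have h := hgrade _ _ _ _ (nest_mem bb hgrade hE k M) (nest_mem bb hgrade hF (k + 1) N)
    rwa [show ((k : ℤ) + 1) * -1 + (((k + 1 : ℕ) : ℤ) + 1) * 1 = 1 by push_cast; ring] at h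
  have hspan := range_nest_one bb F ▸ hspanF 1 le_rfl (by exact_mod_cast hdeg)
  rw [eq_sum_smul_of_mem_span_of_dual hEF hspan, Finset.smul_sum]
  refine Finset.sum_congr rfl fun i _ => ?_
  rw [← hforminv, ← nest_cons, haP (k + 2) (by omega) le_rfl, smul_smul]

/-- Under the tensor-hierarchy hypotheses (with `p = k + 2 ≥ 2`):
`⟦E_{M2⋯Mp}, F^{N1⋯Np}⟧ = a_p Σ_{M1} (ℙ_p)_{M1 M2⋯Mp}{}^{N1⋯Np} F^{M1}`. -/
theorem bracket_E_multi_with_F_multi_top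
    {V : Type} [AddCommGroup V] [Module ℝ V]
    (U : ℤ → Submodule ℝ V)
    (bb : V →ₗ[ℝ] V →ₗ[ℝ] V)
    (form : V →ₗ[ℝ] V →ₗ[ℝ] ℝ)
    (hgrade : ∀ (p q : ℤ) (x y : V), x ∈ U p → y ∈ U q → bb x y ∈ U (p + q))
    (hanti : ∀ (p q : ℤ) (x y : V), x ∈ U p → y ∈ U q →
      bb x y = (-((-1 : ℝ) ^ (p * q))) • bb y x)
    (hjac : ∀ (p q : ℤ) (x y z : V), x ∈ U p → y ∈ U q →
      bb (bb x y) z = bb x (bb y z) - ((-1 : ℝ) ^ (p * q)) • bb y (bb x z))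
    (hform0 : ∀ (p q : ℤ) (x y : V), x ∈ U p → y ∈ U q → p + q ≠ 0 → form x y = 0)
    (hforminv : ∀ x y z : V, form (bb x y) z = form x (bb y z))
    {ι : Type} [Fintype ι] [DecidableEq ι]
    (E F : ι → V)
    (hE : ∀ M, E M ∈ U (-1))
    (hF : ∀ M, F M ∈ U 1)
    (hEF : ∀ M N, form (E M) (F N) = if M = N then (1 : ℝ) else 0)
    (hspanE : ∀ m : ℕ, 1 ≤ m → U (-(m : ℤ)) ≤ Submodule.span ℝ (Set.range (nest bb E m)))
    (hspanF : ∀ m : ℕ, 1 ≤ m → U (m : ℤ) ≤ Submodule.span ℝ (Set.range (nest bb F m)))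
    (k : ℕ)
    (P : (m : ℕ) → (Fin m → ι) → (Fin m → ι) → ℝ)
    (hP1 : ∀ M N : Fin 1 → ι, P 1 M N = if M 0 = N 0 then (1 : ℝ) else 0)
    (hPidem : ∀ m, 2 ≤ m → m ≤ k + 2 → ∀ M N : Fin m → ι,
      ∑ Q : Fin m → ι, P m M Q * P m Q N = P m M N)
    (hPE : ∀ m, 2 ≤ m → m ≤ k + 2 → ∀ M : Fin m → ι,
      nest bb E m M = ∑ N : Fin m → ι, P m M N • nest bb E m N)
    (hPF : ∀ m, 2 ≤ m → m ≤ k + 2 → ∀ N : Fin m → ι,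
      nest bb F m N = ∑ M : Fin m → ι, P m M N • nest bb F m M)
    (hPnest : ∀ m : ℕ, 2 ≤ m + 1 → m + 1 ≤ k + 2 → ∀ M N : Fin (m + 1) → ι,
      P (m + 1) M N = ∑ A : Fin m → ι, ∑ B : Fin m → ι,
        P m (Fin.tail M) A * P (m + 1) (Fin.cons (M 0) A) (Fin.cons (N 0) B) *
          P m B (Fin.tail N))
    (a : ℕ → ℝ)
    (ha1 : a 1 = 1)
    (hane : ∀ m, 1 ≤ m → m ≤ k + 2 → a m ≠ 0)
    (haP : ∀ m, 2 ≤ m → m ≤ k + 2 → ∀ M N : Fin m → ι,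
      form (nest bb E m M) (nest bb F m N) = a m * P m M N) :
    ∀ (M : Fin (k + 1) → ι) (N : Fin (k + 2) → ι),
      bb (nest bb E (k + 1) M) (nest bb F (k + 2) N)
        = a (k + 2) • ∑ M1 : ι, P (k + 2) (Fin.cons M1 M) N • F M1 :=
  bracket_E_multi_with_F_multi_top_general U bb form hgrade hforminv E F hE hF hEF hspanF k P a haP
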